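/- Let K ⊆ L be finite fields and C ⊆ Lⁿ an L-linear code with column spaces V₁,…,Vₙ ⊆ K^k defined from a K-basis of C of the form {bⱼcᵢ}. Then for any i ≠ j, either Vᵢ = Vⱼ or Vᵢ ∩ Vⱼ = {0}; moreover Vᵢ = Vⱼ (both nonzero) holds exactly when the i-th and j-th columns of an L-generator matrix of C are nonzero scalar multiples of one another. -/

import Mathlib

def columnSpace {K L : Type*} [Field K] [Field L] [Algebra K L]
    {m n : ℕ} {ι : Type*} (b : Module.Basis (Fin m) K L) (c : ι → (Fin n → L)) (i : Fin n) :
    Submodule K (ι → K) :=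
  Submodule.span K (Set.range fun j : Fin m => fun r : ι => b.repr (c r i) j)

/-!
For a column `u = (c r i)_r`, the spanning vectors of `Vᵢ` are `(f (b j' * u r))_{(j', r)}` for the
coordinate functionals `f` of `b`; these span `Dual K L`, so `Vᵢ` is the range of
`f ↦ (f (b j' * u r))_{(j', r)}` on all of `Dual K L`. If `f` and `g` give the same nonzero vector
for the columns `u` and `v`, then `f (x * u r) = g (x * v r)` for all `x : L`; normalising at an
`r₀` with `u r₀ ≠ 0` gives `f y = g (λ * y)` with `λ = v r₀ / u r₀`, so
`g (x * (v r - λ * u r)) = 0` for all `x`, which forces `v = λ • u` because `g ≠ 0`.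
Conversely, scaling a column by a unit of `L` only reparametrises the functionals, so it does not
change the range.
-/

section ColumnMap

variable {K L : Type*} [Field K] [Field L] [Algebra K L] {κ ι : Type*}

noncomputable def columnMap (b : Module.Basis κ K L) (u : ι → L) :
    Module.Dual K L →ₗ[K] (κ × ι → K) :=
  LinearMap.pi fun p => Module.Dual.eval K L (b p.1 * u p.2)

@[simp]
lemma columnMap_apply (b : Module.Basis κ K L) (u : ι → L) (f : Module.Dual K L) (p : κ × ι) :
    columnMap b u f p = f (b p.1 * u p.2) :=
  rfl

lemma columnSpace_eq_range_columnMap {m n : ℕ} (b : Module.Basis (Fin m) K L)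
    (c : ι → Fin n → L) (i : Fin n) :
    columnSpace b (fun p : Fin m × ι => fun r => b p.1 * c p.2 r) i
      = LinearMap.range (columnMap b fun r => c r i) := by
  have hrange : (Set.range fun j : Fin m => fun p : Fin m × ι => b.repr (b p.1 * c p.2 i) j)
      = columnMap b (fun r => c r i) '' Set.range b.dualBasis := by
    rw [← Set.range_comp, Module.Basis.coe_dualBasis]
    rfl
  rw [columnSpace, hrange, ← Submodule.map_span, b.dualBasis.span_eq, Submodule.map_top]

lemma columnMap_eq_columnMap_iff (b : Module.Basis κ K L) {u v : ι → L}
    {f g : Module.Dual K L} :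
    columnMap b u f = columnMap b v g ↔ ∀ (x : L) (r : ι), f (x * u r) = g (x * v r) := by
  refine ⟨fun h x r => ?_, fun h => funext fun p => h _ p.2⟩
  have hcomp : f ∘ₗ LinearMap.mulRight K (u r) = g ∘ₗ LinearMap.mulRight K (v r) :=
    b.ext fun j => congrFun h (j, r)
  exact LinearMap.congr_fun hcomp x

lemma columnMap_eq_zero_iff (b : Module.Basis κ K L) {u : ι → L} :
    columnMap b u = 0 ↔ u = 0 := by
  refine ⟨fun h => funext fun r => ?_, fun h => by ext; simp [h]⟩
  by_contra hr
  have hf : ∀ f : Module.Dual K L, f 1 = 0 := fun f => by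
    have := (columnMap_eq_columnMap_iff b (v := u) (g := 0)).mp (LinearMap.congr_fun h f) (u r)⁻¹ r
    rwa [inv_mul_cancel₀ hr] at this
  exact one_ne_zero ((Module.forall_dual_apply_eq_zero_iff K (1 : L)).mp hf)

lemma range_columnMap_eq_bot_iff (b : Module.Basis κ K L) {u : ι → L} :
    LinearMap.range (columnMap b u) = ⊥ ↔ u = 0 := by
  rw [LinearMap.range_eq_bot, columnMap_eq_zero_iff]

lemma range_columnMap_smul_le (b : Module.Basis κ K L) (u : ι → L) (c : L) :
    LinearMap.range (columnMap b (c • u)) ≤ LinearMap.range (columnMap b u) := by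
  rintro _ ⟨f, rfl⟩
  refine ⟨f ∘ₗ LinearMap.mulLeft K c, funext fun p => ?_⟩
  simp only [columnMap_apply, LinearMap.coe_comp, Function.comp_apply, LinearMap.mulLeft_apply,
    Pi.smul_apply, smul_eq_mul, mul_left_comm]

lemma range_columnMap_smul (b : Module.Basis κ K L) (u : ι → L) {c : L} (hc : c ≠ 0) :
    LinearMap.range (columnMap b (c • u)) = LinearMap.range (columnMap b u) := by
  refine le_antisymm (range_columnMap_smul_le b u c) ?_
  simpa [smul_smul, inv_mul_cancel₀ hc] using range_columnMap_smul_le b (c • u) c⁻¹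

lemma eq_zero_of_forall_dual_apply_mul_eq_zero {g : Module.Dual K L} (hg : g ≠ 0) {a : L}
    (h : ∀ x, g (x * a) = 0) : a = 0 := by
  by_contra ha
  exact hg (LinearMap.ext fun y => by simpa [inv_mul_cancel_right₀ ha] using h (y * a⁻¹))

lemma exists_eq_smul_of_columnMap_eq (b : Module.Basis κ K L) {u v : ι → L} (hu : u ≠ 0)
    {f g : Module.Dual K L} (hg : g ≠ 0) (h : columnMap b u f = columnMap b v g) :
    ∃ c : L, v = c • u := by
  obtain ⟨r₀, hr₀⟩ := Function.ne_iff.mp hu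
  have hfg := (columnMap_eq_columnMap_iff b).mp h
  have hf : ∀ y, f y = g (v r₀ * (u r₀)⁻¹ * y) := fun y => by
    have := hfg (y * (u r₀)⁻¹) r₀
    rw [inv_mul_cancel_right₀ hr₀] at this
    rw [this]
    ring_nf
  refine ⟨v r₀ * (u r₀)⁻¹, funext fun r => sub_eq_zero.mp <|
    eq_zero_of_forall_dual_apply_mul_eq_zero hg fun x => ?_⟩
  rw [mul_sub, map_sub, ← hfg, hf, Pi.smul_apply, smul_eq_mul]
  ring_nf

lemma exists_eq_smul_of_inf_range_columnMap_ne_bot (b : Module.Basis κ K L) {u v : ι → L}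
    (h : LinearMap.range (columnMap b u) ⊓ LinearMap.range (columnMap b v) ≠ ⊥) :
    u ≠ 0 ∧ ∃ c : L, c ≠ 0 ∧ v = c • u := by
  obtain ⟨_, ⟨⟨f, rfl⟩, ⟨g, hfg⟩⟩, hw⟩ := (Submodule.ne_bot_iff _).mp h
  have hu : u ≠ 0 := fun hu => hw <| by
    rw [(columnMap_eq_zero_iff b).mpr hu, LinearMap.zero_apply]
  have hg : g ≠ 0 := fun hg => hw (by rw [← hfg, hg, map_zero])
  obtain ⟨c, rfl⟩ := exists_eq_smul_of_columnMap_eq b hu hg hfg.symm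
  refine ⟨hu, c, fun hc => hw ?_, rfl⟩
  rw [← hfg, (columnMap_eq_zero_iff b).mpr (by simp [hc]), LinearMap.zero_apply]

lemma range_columnMap_eq_or_inf_eq_bot (b : Module.Basis κ K L) (u v : ι → L) :
    LinearMap.range (columnMap b u) = LinearMap.range (columnMap b v) ∨
      LinearMap.range (columnMap b u) ⊓ LinearMap.range (columnMap b v) = ⊥ := by
  refine or_iff_not_imp_right.mpr fun h => ?_
  obtain ⟨-, c, hc, rfl⟩ := exists_eq_smul_of_inf_range_columnMap_ne_bot b h
  exact (range_columnMap_smul b u hc).symm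

lemma range_columnMap_eq_and_ne_bot_iff (b : Module.Basis κ K L) (u v : ι → L) :
    (LinearMap.range (columnMap b u) = LinearMap.range (columnMap b v) ∧
        LinearMap.range (columnMap b u) ≠ ⊥) ↔
      u ≠ 0 ∧ ∃ c : L, c ≠ 0 ∧ v = c • u := by
  constructor
  · rintro ⟨heq, hne⟩
    exact exists_eq_smul_of_inf_range_columnMap_ne_bot b (by rwa [← heq, inf_idem])
  · rintro ⟨hu, c, hc, rfl⟩
    exact ⟨(range_columnMap_smul b u hc).symm, (range_columnMap_eq_bot_iff b).not.mpr hu⟩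

end ColumnMap

theorem stmt_14_general {K L : Type*} [Field K] [Field L] [Algebra K L]
    {m n kL : ℕ} (b : Module.Basis (Fin m) K L)
    (cL : Fin kL → (Fin n → L)) :
    ∀ i j : Fin n, i ≠ j →
      (columnSpace b (fun p : Fin m × Fin kL => fun r => b p.1 * cL p.2 r) i =
         columnSpace b (fun p : Fin m × Fin kL => fun r => b p.1 * cL p.2 r) j ∨
       columnSpace b (fun p : Fin m × Fin kL => fun r => b p.1 * cL p.2 r) i ⊓
         columnSpace b (fun p : Fin m × Fin kL => fun r => b p.1 * cL p.2 r) j = ⊥) ∧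
      ((columnSpace b (fun p : Fin m × Fin kL => fun r => b p.1 * cL p.2 r) i =
          columnSpace b (fun p : Fin m × Fin kL => fun r => b p.1 * cL p.2 r) j ∧
        columnSpace b (fun p : Fin m × Fin kL => fun r => b p.1 * cL p.2 r) i ≠ ⊥) ↔
       ((∃ r : Fin kL, cL r i ≠ 0) ∧
        ∃ lam : L, lam ≠ 0 ∧ ∀ r : Fin kL, cL r j = lam * cL r i)) := by
  intro i j _
  simp only [columnSpace_eq_range_columnMap]
  refine ⟨range_columnMap_eq_or_inf_eq_bot b _ _, ?_⟩
  rw [range_columnMap_eq_and_ne_bot_iff]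
  simp only [ne_eq, funext_iff, Pi.zero_apply, not_forall, Pi.smul_apply, smul_eq_mul]

/-- For an `L`-linear code with column spaces defined via the `K`-basis `{bⱼ • cᵢ}`:
any two column spaces either coincide or intersect trivially; they coincide and
are nonzero exactly when the corresponding columns of the `L`-generator matrix
are nonzero scalar multiples of one another. -/
theorem stmt_14 {K L : Type*} [Field K] [Field L] [Algebra K L]
    [Fintype K] [Fintype L] {m n kL : ℕ} (b : Module.Basis (Fin m) K L)
    (C : Submodule L (Fin n → L)) (cL : Fin kL → (Fin n → L))
    (hli : LinearIndependent L cL) (hspan : Submodule.span L (Set.range cL) = C) :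
    ∀ i j : Fin n, i ≠ j →
      (columnSpace b (fun p : Fin m × Fin kL => fun r => b p.1 * cL p.2 r) i =
         columnSpace b (fun p : Fin m × Fin kL => fun r => b p.1 * cL p.2 r) j ∨
       columnSpace b (fun p : Fin m × Fin kL => fun r => b p.1 * cL p.2 r) i ⊓
         columnSpace b (fun p : Fin m × Fin kL => fun r => b p.1 * cL p.2 r) j = ⊥) ∧
      ((columnSpace b (fun p : Fin m × Fin kL => fun r => b p.1 * cL p.2 r) i =
          columnSpace b (fun p : Fin m × Fin kL => fun r => b p.1 * cL p.2 r) j ∧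
        columnSpace b (fun p : Fin m × Fin kL => fun r => b p.1 * cL p.2 r) i ≠ ⊥) ↔
       ((∃ r : Fin kL, cL r i ≠ 0) ∧
        ∃ lam : L, lam ≠ 0 ∧ ∀ r : Fin kL, cL r j = lam * cL r i)) :=
  stmt_14_general b cL
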